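/- Let X and Y be real Hilbert spaces and let (u_k) be iterates of the iteratively regularized Landweber iteration with exact data: u_{k+1} = u_k − F'(u_k)*(F(u_k) − y) − λ_k·Â'(u_k)*(Â(u_k) − y), where y = F(u†). Suppose F is continuous, the two-point tangential cone condition ‖F(u) − F(v) − F'(u)(u − v)‖ ≤ ν‖F(u) − F(v)‖ holds on B_ρ(u†) with ν > 0, for every k: u_k ∈ B_ρ(u†), ‖F'(u_k)‖ ≤ L_F, ‖Â'(u_k)‖ ≤ L_Â, ‖Â(u_k) − y‖ ≤ C_Â^0, λ_k·L_Â·C_Â^0 ≤ ρ and λ_k ≤ C_λ^0·‖F(u_k) − y‖², and that 1 − ν − L_F² − 2·L_Â·C_Â^0·C_λ^0·ρ > 0. Then (u_k) converges strongly in X to some u_∞ with F(u_∞) = y; i.e., the iteration converges to a solution of F(u) = y. -/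

import Mathlib

/-!
Write `e_k = u_k - u†` and `r_k = F(u_k) - y`. The tangential cone condition at `(u_k, u†)` gives
`⟪e_k, F'(u_k)* r_k⟫ ≥ (1 - ν)‖r_k‖²`, while the regularizing term has norm at most
`λ_k L_Â C_Â⁰ ≤ min(ρ, C_λ⁰ L_Â C_Â⁰ ‖r_k‖²)`; hence
`‖e_{k+1}‖² + 2c‖r_k‖² ≤ ‖e_k‖²` with `c = 1 - ν - L_F² - 2 L_Â C_Â⁰ C_λ⁰ ρ > 0`.
So `‖e_k‖` decreases and `∑ ‖r_k‖² < ∞`.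

For the Cauchy property (the argument of Hanke, Neubauer and Scherzer), given `l ≤ k` choose
`j ∈ [l, k]` with minimal residual. Then `‖u_m - u_j‖² = ‖e_m‖² - ‖e_j‖² + 2⟪u_j - u_m, e_j⟫`,
and the cone condition at `(u_i, u_j)` bounds `|⟪u_i - u_{i+1}, e_j⟫|` by a multiple of `‖r_i‖²`
as soon as `‖r_j‖ ≤ ‖r_i‖`; so both terms are controlled by tails of convergent sequences.
Since `r_k → 0` and `F` is continuous, the limit solves `F(u) = y`.
-/

open scoped RealInnerProductSpace
open Filter Topology Finset

lemma one_sub_mul_sq_le_inner_of_norm_sub_le {E : Type*} [NormedAddCommGroup E]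
    [InnerProductSpace ℝ E] {r v : E} {ν : ℝ} (h : ‖r - v‖ ≤ ν * ‖r‖) :
    (1 - ν) * ‖r‖ ^ 2 ≤ ⟪v, r⟫ := by
  have hle : ⟪r - v, r⟫ ≤ ν * ‖r‖ ^ 2 :=
    (real_inner_le_norm _ _).trans
      (by nlinarith [mul_le_mul_of_nonneg_right h (norm_nonneg r)])
  rw [inner_sub_left, real_inner_self_eq_norm_sq] at hle
  linarith

lemma norm_le_one_add_mul_of_norm_sub_le {E : Type*} [SeminormedAddCommGroup E] {r v : E} {ν : ℝ}
    (h : ‖r - v‖ ≤ ν * ‖r‖) : ‖v‖ ≤ (1 + ν) * ‖r‖ :=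
  calc ‖v‖ = ‖r - (r - v)‖ := by rw [sub_sub_cancel]
    _ ≤ ‖r‖ + ‖r - v‖ := norm_sub_le _ _
    _ ≤ (1 + ν) * ‖r‖ := by linarith

section LandweberStep

variable {X Y : Type*} [NormedAddCommGroup X] [InnerProductSpace ℝ X] [CompleteSpace X]
  [NormedAddCommGroup Y] [InnerProductSpace ℝ Y] [CompleteSpace Y]

lemma ContinuousLinearMap.norm_adjoint_apply_le (T : X →L[ℝ] Y) (v : Y) :
    ‖adjoint T v‖ ≤ ‖T‖ * ‖v‖ := by
  simpa only [LinearIsometryEquiv.norm_map] using (adjoint T).le_opNorm v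

lemma norm_smul_adjoint_apply_le {T : X →L[ℝ] Y} {v : Y} {t L C : ℝ} (ht : 0 ≤ t)
    (hT : ‖T‖ ≤ L) (hv : ‖v‖ ≤ C) : ‖t • ContinuousLinearMap.adjoint T v‖ ≤ t * L * C := by
  rw [norm_smul, Real.norm_of_nonneg ht, mul_assoc]
  exact mul_le_mul_of_nonneg_left ((T.norm_adjoint_apply_le v).trans
    (mul_le_mul hT hv (norm_nonneg _) ((norm_nonneg _).trans hT))) ht

lemma norm_sub_adjoint_add_sq_le {T : X →L[ℝ] Y} {e w : X} {r : Y} {L ν ρ m : ℝ}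
    (hT : ‖T‖ ≤ L) (hcone : ‖r - T e‖ ≤ ν * ‖r‖) (he : ‖e‖ ≤ ρ) (hw : ‖w‖ ≤ m)
    (hmρ : m ≤ ρ) :
    ‖e - (ContinuousLinearMap.adjoint T r + w)‖ ^ 2
      ≤ ‖e‖ ^ 2 - 2 * (1 - ν - L ^ 2) * ‖r‖ ^ 2 + 4 * ρ * m := by
  have hm : 0 ≤ m := (norm_nonneg _).trans hw
  have hTr : ‖ContinuousLinearMap.adjoint T r‖ ≤ L * ‖r‖ :=
    (T.norm_adjoint_apply_le r).trans (mul_le_mul_of_nonneg_right hT (norm_nonneg _))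
  have hinner_Tr : (1 - ν) * ‖r‖ ^ 2 ≤ ⟪e, ContinuousLinearMap.adjoint T r⟫ := by
    rw [ContinuousLinearMap.adjoint_inner_right]
    exact one_sub_mul_sq_le_inner_of_norm_sub_le hcone
  have hinner_w : -(ρ * m) ≤ ⟪e, w⟫ :=
    neg_le_of_abs_le ((abs_real_inner_le_norm e w).trans
      (mul_le_mul he hw (norm_nonneg _) ((norm_nonneg _).trans he)))
  have hnorm : ‖ContinuousLinearMap.adjoint T r + w‖ ^ 2 ≤ 2 * L ^ 2 * ‖r‖ ^ 2 + 2 * ρ * m := by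
    have hTr2 := pow_le_pow_left₀ (norm_nonneg _) hTr 2
    have hw2 : ‖w‖ ^ 2 ≤ ρ * m := by nlinarith [norm_nonneg w]
    rw [mul_pow] at hTr2
    calc ‖ContinuousLinearMap.adjoint T r + w‖ ^ 2
        ≤ (‖ContinuousLinearMap.adjoint T r‖ + ‖w‖) ^ 2 :=
          pow_le_pow_left₀ (norm_nonneg _) (norm_add_le _ _) 2
      _ ≤ 2 * ‖ContinuousLinearMap.adjoint T r‖ ^ 2 + 2 * ‖w‖ ^ 2 := by
          nlinarith [sq_nonneg (‖ContinuousLinearMap.adjoint T r‖ - ‖w‖)]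
      _ ≤ 2 * L ^ 2 * ‖r‖ ^ 2 + 2 * ρ * m := by linarith
  rw [norm_sub_sq_real, inner_add_right]
  linarith

lemma abs_inner_adjoint_add_sub_le {T : X →L[ℝ] Y} {a b w : X} {r s : Y} {ν ρ m : ℝ}
    (hν : 0 ≤ ν) (ha : ‖r - T a‖ ≤ ν * ‖r‖) (hb : ‖r - s - T b‖ ≤ ν * ‖r - s‖)
    (hs : ‖s‖ ≤ ‖r‖) (hw : ‖w‖ ≤ m) (hab : ‖a - b‖ ≤ ρ) :
    |⟪ContinuousLinearMap.adjoint T r + w, a - b⟫| ≤ 3 * (1 + ν) * ‖r‖ ^ 2 + ρ * m := by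
  have hTa := norm_le_one_add_mul_of_norm_sub_le ha
  have hTb : ‖T b‖ ≤ 2 * (1 + ν) * ‖r‖ :=
    (norm_le_one_add_mul_of_norm_sub_le hb).trans (by nlinarith [norm_sub_le r s])
  have hTab : ‖T (a - b)‖ ≤ 3 * (1 + ν) * ‖r‖ := by
    rw [map_sub]
    linarith [norm_sub_le (T a) (T b)]
  calc |⟪ContinuousLinearMap.adjoint T r + w, a - b⟫|
      ≤ |⟪r, T (a - b)⟫| + |⟪w, a - b⟫| := by
        rw [inner_add_left, ContinuousLinearMap.adjoint_inner_left]
        exact abs_add_le _ _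
    _ ≤ ‖r‖ * ‖T (a - b)‖ + ‖w‖ * ‖a - b‖ :=
        add_le_add (abs_real_inner_le_norm _ _) (abs_real_inner_le_norm _ _)
    _ ≤ ‖r‖ * (3 * (1 + ν) * ‖r‖) + m * ρ :=
        add_le_add (mul_le_mul_of_nonneg_left hTab (norm_nonneg _))
          (mul_le_mul hw hab (norm_nonneg _) ((norm_nonneg _).trans hw))
    _ = 3 * (1 + ν) * ‖r‖ ^ 2 + ρ * m := by ring

end LandweberStep

lemma summable_of_add_mul_le {a b : ℕ → ℝ} {c : ℝ} (hc : 0 < c) (ha : ∀ n, 0 ≤ a n)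
    (hb : ∀ n, 0 ≤ b n) (h : ∀ n, a (n + 1) + c * b n ≤ a n) : Summable b := by
  have hpartial : ∀ n, c * ∑ i ∈ range n, b i ≤ a 0 - a n := by
    intro n
    induction n with
    | zero => simp
    | succ n ih => rw [sum_range_succ, mul_add]; linarith [h n]
  exact summable_of_sum_range_le (c := a 0 / c) hb fun n =>
    (le_div_iff₀' hc).2 ((hpartial n).trans (by linarith [ha n]))

lemma sum_Ico_le_tsum_sub_sum_range {s : ℕ → ℝ} (hs : Summable s) (hs0 : ∀ i, 0 ≤ s i)
    {N a : ℕ} (hNa : N ≤ a) (b : ℕ) :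
    ∑ i ∈ Ico a b, s i ≤ ∑' i, s i - ∑ i ∈ range N, s i := by
  have hdisj : Disjoint (range N) (Ico a b) :=
    disjoint_left.2 fun i hi hi' => by simp only [mem_range, mem_Ico] at hi hi'; omega
  have := hs.sum_le_tsum (range N ∪ Ico a b) (fun i _ => hs0 i)
  rw [sum_union hdisj] at this
  linarith

lemma tendsto_of_summable_norm_sub_sq {E : Type*} [SeminormedAddCommGroup E] {f : ℕ → E} {y : E}
    (h : Summable fun n => ‖f n - y‖ ^ 2) : Tendsto f atTop (𝓝 y) := by
  rw [tendsto_iff_norm_sub_tendsto_zero]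
  simpa [Real.sqrt_sq (norm_nonneg _)] using h.tendsto_atTop_zero.sqrt

section Fejer

variable {X : Type*} [NormedAddCommGroup X] [InnerProductSpace ℝ X]

lemma abs_inner_sub_le_sum_Ico {u : ℕ → X} {v : X} {s : ℕ → ℝ} {a b : ℕ} (hab : a ≤ b)
    (h : ∀ i ∈ Ico a b, |⟪u i - u (i + 1), v⟫| ≤ s i) :
    |⟪u a - u b, v⟫| ≤ ∑ i ∈ Ico a b, s i := by
  have htel : u a - u b = ∑ i ∈ Ico a b, (u i - u (i + 1)) := by
    rw [← neg_sub, ← sum_Ico_sub u hab, ← sum_neg_distrib]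
    simp only [neg_sub]
  rw [htel, sum_inner]
  exact (abs_sum_le_sum_abs _ _).trans (sum_le_sum h)

lemma norm_sub_sq_eq_sub_add_inner (p q : X) :
    ‖p - q‖ ^ 2 = ‖p‖ ^ 2 - ‖q‖ ^ 2 + 2 * ⟪q - p, q⟫ := by
  rw [norm_sub_sq_real, inner_sub_left, real_inner_self_eq_norm_sq, real_inner_comm]
  ring

theorem cauchySeq_of_antitone_norm_sub_sq_of_abs_inner_le {u : ℕ → X} {x : X} {r s : ℕ → ℝ}
    (hg : Antitone fun n => ‖u n - x‖ ^ 2) (hs : Summable s)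
    (hcross : ∀ i j, r j ≤ r i → |⟪u i - u (i + 1), u j - x⟫| ≤ s i) : CauchySeq u := by
  set g : ℕ → ℝ := fun n => ‖u n - x‖ ^ 2
  obtain ⟨G, hgG⟩ : ∃ G, Tendsto g atTop (𝓝 G) :=
    ⟨_, tendsto_atTop_ciInf hg ⟨0, by rintro _ ⟨n, rfl⟩; positivity⟩⟩
  set tail : ℕ → ℝ := fun N => ∑' i, s i - ∑ i ∈ range N, s i
  have hs0 : ∀ i, 0 ≤ s i := fun i => (abs_nonneg _).trans (hcross i i le_rfl)
  have hnear : ∀ N a j, N ≤ a → N ≤ j → ⟪u j - u a, u j - x⟫ ≤ tail N →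
      ‖u a - u j‖ ≤ √(g N - G + 2 * tail N) := by
    intro N a j ha hj hinner
    refine Real.le_sqrt_of_sq_le ?_
    have hid := norm_sub_sq_eq_sub_add_inner (u a - x) (u j - x)
    simp only [sub_sub_sub_cancel_right] at hid
    linarith [hg ha, hg.le_of_tendsto hgG j]
  have hdist : ∀ N l k, N ≤ l → l ≤ k → dist (u l) (u k) ≤ 2 * √(g N - G + 2 * tail N) := by
    intro N l k hNl hlk
    obtain ⟨j, hj, hjmin⟩ := exists_min_image (Icc l k) r ⟨l, left_mem_Icc.2 hlk⟩
    rw [mem_Icc] at hj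
    have hmin : ∀ i ∈ Ico l k, r j ≤ r i := fun i hi => hjmin i (Ico_subset_Icc_self hi)
    have hleft : |⟪u l - u j, u j - x⟫| ≤ tail N :=
      (abs_inner_sub_le_sum_Ico hj.1 fun i hi =>
        hcross i j (hmin i (Ico_subset_Ico_right hj.2 hi))).trans
        (sum_Ico_le_tsum_sub_sum_range hs hs0 hNl j)
    have hright : |⟪u j - u k, u j - x⟫| ≤ tail N :=
      (abs_inner_sub_le_sum_Ico hj.2 fun i hi =>
        hcross i j (hmin i (Ico_subset_Ico_left hj.1 hi))).trans
        (sum_Ico_le_tsum_sub_sum_range hs hs0 (hNl.trans hj.1) k)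
    have hl := hnear N l j hNl (hNl.trans hj.1)
      (by rw [← neg_sub, inner_neg_left]; exact (neg_le_abs _).trans hleft)
    have hk := hnear N k j (hNl.trans hlk) (hNl.trans hj.1) (le_of_abs_le hright)
    calc dist (u l) (u k) ≤ dist (u l) (u j) + dist (u k) (u j) := dist_triangle_right _ _ _
      _ ≤ 2 * √(g N - G + 2 * tail N) := by rw [dist_eq_norm, dist_eq_norm]; linarith
  refine cauchySeq_of_le_tendsto_0 (fun N => 2 * √(g N - G + 2 * tail N))
    (fun n m N hn hm => ?_) ?_
  · rcases le_total n m with h | h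
    · exact hdist N n m hn h
    · rw [dist_comm]; exact hdist N m n hm h
  · have htail : Tendsto tail atTop (𝓝 0) := by
      simpa [tail] using (tendsto_const_nhds (x := ∑' i, s i)).sub hs.hasSum.tendsto_sum_nat
    simpa using (((hgG.sub_const G).add (htail.const_mul 2)).sqrt).const_mul 2

end Fejer

theorem stmt9_general
    {X Y : Type*}
    [NormedAddCommGroup X] [InnerProductSpace ℝ X] [CompleteSpace X]
    [NormedAddCommGroup Y] [InnerProductSpace ℝ Y] [CompleteSpace Y]
    (F A : X → Y) (udag : X) (y : Y) (ρ LF LA ν CA Clam : ℝ)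
    (u : ℕ → X) (lam : ℕ → ℝ)
    (F' A' : X → X →L[ℝ] Y)
    (hy : y = F udag) (hρ : 0 < ρ) (hν : 0 < ν)
    (hCA : 0 < CA)
    (hFcont : Continuous F)
    (hiter : ∀ k : ℕ,
      u (k + 1) = u k - ContinuousLinearMap.adjoint (F' (u k)) (F (u k) - y)
        - lam k • ContinuousLinearMap.adjoint (A' (u k)) (A (u k) - y))
    (hball : ∀ k, u k ∈ Metric.closedBall udag ρ)
    (hLF : ∀ k, ‖F' (u k)‖ ≤ LF)
    (hLA : ∀ k, ‖A' (u k)‖ ≤ LA)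
    (hAres : ∀ k, ‖A (u k) - y‖ ≤ CA)
    (hlam0 : ∀ k, 0 ≤ lam k)
    (hlam1 : ∀ k, lam k * LA * CA ≤ ρ)
    (hlam2 : ∀ k, lam k ≤ Clam * ‖F (u k) - y‖ ^ 2)
    (htcc : ∀ v ∈ Metric.closedBall udag ρ, ∀ w ∈ Metric.closedBall udag ρ,
      ‖F v - F w - (F' v) (v - w)‖ ≤ ν * ‖F v - F w‖)
    (hpos : 0 < 1 - ν - LF ^ 2 - 2 * LA * CA * Clam * ρ) :
    ∃ uinf : X, Filter.Tendsto u Filter.atTop (nhds uinf) ∧ F uinf = y := by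
  set w : ℕ → X := fun k => lam k • ContinuousLinearMap.adjoint (A' (u k)) (A (u k) - y)
  have hincr : ∀ k, u k - u (k + 1) = ContinuousLinearMap.adjoint (F' (u k)) (F (u k) - y) + w k :=
    fun k => by rw [hiter k]; abel
  have he : ∀ k, ‖u k - udag‖ ≤ ρ := fun k => mem_closedBall_iff_norm.1 (hball k)
  have hw : ∀ k, ‖w k‖ ≤ lam k * LA * CA :=
    fun k => norm_smul_adjoint_apply_le (hlam0 k) (hLA k) (hAres k)
  have hm : ∀ k, ρ * (lam k * LA * CA) ≤ ρ * Clam * LA * CA * ‖F (u k) - y‖ ^ 2 := fun k => by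
    have hLACA : 0 ≤ LA * CA := mul_nonneg ((norm_nonneg _).trans (hLA 0)) hCA.le
    have := mul_le_mul_of_nonneg_left (mul_le_mul_of_nonneg_right (hlam2 k) hLACA) hρ.le
    linarith
  have hcone : ∀ i, ‖(F (u i) - y) - F' (u i) (u i - udag)‖ ≤ ν * ‖F (u i) - y‖ := fun i => by
    simpa only [hy] using htcc (u i) (hball i) udag (Metric.mem_closedBall_self hρ.le)
  have hdescent : ∀ k, ‖u (k + 1) - udag‖ ^ 2
      + 2 * (1 - ν - LF ^ 2 - 2 * LA * CA * Clam * ρ) * ‖F (u k) - y‖ ^ 2 ≤ ‖u k - udag‖ ^ 2 := by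
    intro k
    have := norm_sub_adjoint_add_sq_le (hLF k) (hcone k) (he k) (hw k) (hlam1 k)
    rw [← hincr k, sub_sub_sub_cancel_left] at this
    linarith [hm k]
  have hsum : Summable fun k => ‖F (u k) - y‖ ^ 2 :=
    summable_of_add_mul_le (mul_pos two_pos hpos) (fun k => sq_nonneg ‖u k - udag‖)
      (fun _ => sq_nonneg _) hdescent
  have hcauchy : CauchySeq u := by
    refine cauchySeq_of_antitone_norm_sub_sq_of_abs_inner_le (r := fun k => ‖F (u k) - y‖)
      (antitone_nat_of_succ_le fun k => by nlinarith [hdescent k, sq_nonneg ‖F (u k) - y‖])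
      (hsum.mul_left (3 * (1 + ν) + ρ * Clam * LA * CA)) fun i j hji => ?_
    have := abs_inner_adjoint_add_sub_le (ρ := ρ) hν.le (hcone i)
      (by simpa only [sub_sub_sub_cancel_right] using htcc (u i) (hball i) (u j) (hball j))
      hji (hw i) (by rw [sub_sub_sub_cancel_left]; exact he j)
    rw [← hincr i, sub_sub_sub_cancel_left] at this
    linarith [hm i]
  obtain ⟨uinf, hlim⟩ := cauchySeq_tendsto_of_complete hcauchy
  exact ⟨uinf, hlim, tendsto_nhds_unique ((hFcont.tendsto uinf).comp hlim)
    (tendsto_of_summable_norm_sub_sq hsum)⟩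

/-- Theorem 2.6 (convergence with exact data): the iteratively regularized Landweber iteration
with exact data `y = F(u†)`, under the two-point tangential cone condition, the stated bounds
and `1 − ν − L_F² − 2·L_Â·C_Â⁰·C_λ⁰·ρ > 0`, converges strongly to a solution of `F(u) = y`. -/
theorem stmt9
    {X Y : Type*}
    [NormedAddCommGroup X] [InnerProductSpace ℝ X] [CompleteSpace X]
    [NormedAddCommGroup Y] [InnerProductSpace ℝ Y] [CompleteSpace Y]
    (F A : X → Y) (udag : X) (y : Y) (ρ LF LA ν CA Clam : ℝ)
    (u : ℕ → X) (lam : ℕ → ℝ)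
    (F' A' : X → X →L[ℝ] Y)
    (hy : y = F udag) (hρ : 0 < ρ) (hν : 0 < ν)
    (hCA : 0 < CA) (hClam : 0 < Clam)
    (hFcont : Continuous F)
    (hiter : ∀ k : ℕ,
      u (k + 1) = u k - ContinuousLinearMap.adjoint (F' (u k)) (F (u k) - y)
        - lam k • ContinuousLinearMap.adjoint (A' (u k)) (A (u k) - y))
    (hball : ∀ k, u k ∈ Metric.closedBall udag ρ)
    (hdF : ∀ k, HasFDerivAt F (F' (u k)) (u k))
    (hdA : ∀ k, HasFDerivAt A (A' (u k)) (u k))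
    (hLF : ∀ k, ‖F' (u k)‖ ≤ LF)
    (hLA : ∀ k, ‖A' (u k)‖ ≤ LA)
    (hAres : ∀ k, ‖A (u k) - y‖ ≤ CA)
    (hlam0 : ∀ k, 0 ≤ lam k)
    (hlam1 : ∀ k, lam k * LA * CA ≤ ρ)
    (hlam2 : ∀ k, lam k ≤ Clam * ‖F (u k) - y‖ ^ 2)
    (htcc : ∀ v ∈ Metric.closedBall udag ρ, ∀ w ∈ Metric.closedBall udag ρ,
      ‖F v - F w - (F' v) (v - w)‖ ≤ ν * ‖F v - F w‖)
    (hpos : 0 < 1 - ν - LF ^ 2 - 2 * LA * CA * Clam * ρ) :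
    ∃ uinf : X, Filter.Tendsto u Filter.atTop (nhds uinf) ∧ F uinf = y :=
  stmt9_general F A udag y ρ LF LA ν CA Clam u lam F' A' hy hρ hν hCA hFcont hiter hball hLF hLA
    hAres hlam0 hlam1 hlam2 htcc hpos
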